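/- arXiv:1710.10374 — 7 statements merged into one kernel-verified Lean document; each statement's English description precedes it below -/
import Mathlib

section
/- If X is a topological space with exactly one non-isolated point p, then X has a monotone open closure-preserving operator: there is a function r assigning to each open cover U of X an open refinement r(U) covering X that is a closure-preserving family, such that whenever an open cover U refines an open cover V, the cover r(U) refines r(V). -/
open Set Topology Filter

variable {X : Type*}

/-- A family `F` of subsets is closure-preserving if for every subfamily `H ⊆ F`,
the closure of the union of `H` is the union of the closures of members of `H`. -/
def ClosurePreserving [TopologicalSpace X] (F : Set (Set X)) : Prop :=
  ∀ H ⊆ F, closure (⋃₀ H) = ⋃ A ∈ H, closure A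

/-- A cover `A` refines a cover `B` if every member of `A` is contained in some member of `B`. -/
def Refines (A B : Set (Set X)) : Prop :=
  ∀ s ∈ A, ∃ t ∈ B, s ⊆ t

/-- An open cover of the space. -/
def IsOpenCover [TopologicalSpace X] (U : Set (Set X)) : Prop :=
  (∀ s ∈ U, IsOpen s) ∧ ⋃₀ U = Set.univ

/-- A monotone closure-preserving operator: assigns to each open cover `U` a
closure-preserving cover `r U` (by arbitrary sets) refining `U`, monotonically. -/
def MonotoneCPOperator [TopologicalSpace X] (r : Set (Set X) → Set (Set X)) : Prop :=
  (∀ U, IsOpenCover U →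
    ⋃₀ r U = Set.univ ∧ Refines (r U) U ∧ ClosurePreserving (r U)) ∧
  ∀ U V, IsOpenCover U → IsOpenCover V → Refines U V → Refines (r U) (r V)

/-- A GO-space: the topology is finer than the order topology (all open rays are open)
and has a base of order-convex sets. -/
def IsGOSpace (X : Type*) [LinearOrder X] [TopologicalSpace X] : Prop :=
  (∀ a : X, IsOpen (Set.Iio a)) ∧ (∀ a : X, IsOpen (Set.Ioi a)) ∧
  ∀ s : Set X, IsOpen s → ∀ x ∈ s, ∃ t : Set X, IsOpen t ∧ x ∈ t ∧ t ⊆ s ∧ t.OrdConnected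

/-- A space with exactly one non-isolated point has a monotone open
closure-preserving operator. -/
theorem stmt0 [TopologicalSpace X] (p : X)
    (hp : {x : X | ¬ IsOpen ({x} : Set X)} = {p}) :
    ∃ r : Set (Set X) → Set (Set X),
      (∀ U, IsOpenCover U →
        (∀ s ∈ r U, IsOpen s) ∧ ⋃₀ r U = Set.univ ∧ Refines (r U) U ∧
          ClosurePreserving (r U)) ∧
      ∀ U V, IsOpenCover U → IsOpenCover V → Refines U V → Refines (r U) (r V) := by
  classical
  have hiso : ∀ x : X, x ≠ p → IsOpen ({x} : Set X) := by
    intro x hx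
    by_contra h
    have : x ∈ {x : X | ¬ IsOpen ({x} : Set X)} := h
    rw [hp] at this
    exact hx this
  set r : Set (Set X) → Set (Set X) := fun U =>
    {s | s ∈ U ∧ p ∈ s} ∪ {s | ∃ x ∉ ⋃₀ {t ∈ U | p ∈ t}, s = ({x} : Set X)}
    with hr
  have hAopen : ∀ U : Set (Set X), IsOpenCover U →
      IsOpen (⋃₀ {t ∈ U | p ∈ t}) := by
    intro U hU
    exact isOpen_sUnion fun t ht => hU.1 t ht.1
  have hpA : ∀ U : Set (Set X), IsOpenCover U → p ∈ ⋃₀ {t ∈ U | p ∈ t} := by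
    intro U hU
    have : p ∈ ⋃₀ U := hU.2 ▸ Set.mem_univ p
    obtain ⟨t, ht, hpt⟩ := this
    exact ⟨t, ⟨ht, hpt⟩, hpt⟩
  refine ⟨r, ?_, ?_⟩
  · intro U hU
    refine ⟨?_, ?_, ?_, ?_⟩
    · -- open
      rintro s (⟨hs, -⟩ | ⟨x, hx, rfl⟩)
      · exact hU.1 s hs
      · exact hiso x fun h => hx (h ▸ hpA U hU)
    · -- cover
      apply Set.eq_univ_of_forall
      intro x
      by_cases hx : x ∈ ⋃₀ {t ∈ U | p ∈ t}
      · obtain ⟨t, ⟨ht, hpt⟩, hxt⟩ := hx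
        exact ⟨t, Or.inl ⟨ht, hpt⟩, hxt⟩
      · exact ⟨{x}, Or.inr ⟨x, hx, rfl⟩, rfl⟩
    · -- refines
      rintro s (⟨hs, -⟩ | ⟨x, hx, rfl⟩)
      · exact ⟨s, hs, subset_rfl⟩
      · have : x ∈ ⋃₀ U := hU.2 ▸ Set.mem_univ x
        obtain ⟨t, ht, hxt⟩ := this
        exact ⟨t, ht, Set.singleton_subset_iff.mpr hxt⟩
    · -- closure preserving
      intro H hH
      apply Set.Subset.antisymm
      · intro y hy
        by_cases hyp : y = p
        · subst hyp
          by_cases hex : ∃ A ∈ H, y ∈ A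
          · obtain ⟨A, hA, hyA⟩ := hex
            exact Set.mem_biUnion hA (subset_closure hyA)
          · exfalso
            push_neg at hex
            have hdisj : (⋃₀ H : Set X) ∩ ⋃₀ ({t | t ∈ U ∧ y ∈ t} : Set (Set X)) = ∅ := by
              apply Set.eq_empty_of_forall_notMem
              rintro z ⟨⟨A, hA, hzA⟩, hzAU⟩
              rcases hH hA with ⟨-, hpA'⟩ | ⟨x, hx, rfl⟩
              · exact hex A hA hpA'
              · exact hx (Set.mem_singleton_iff.mp hzA ▸ hzAU)
            have := mem_closure_iff.mp hy _ (hAopen U hU) (hpA U hU)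
            obtain ⟨z, hz1, hz2⟩ := this
            exact absurd (Set.mem_inter hz2 hz1) (hdisj ▸ Set.notMem_empty z)
        · have := mem_closure_iff.mp hy _ (hiso y hyp) rfl
          obtain ⟨z, hz1, hz2⟩ := this
          rw [Set.mem_singleton_iff] at hz1
          subst hz1
          obtain ⟨A, hA, hzA⟩ := hz2
          exact Set.mem_biUnion hA (subset_closure hzA)
      · intro y hy
        simp only [Set.mem_iUnion] at hy
        obtain ⟨A, hA, hyA⟩ := hy
        exact closure_mono (Set.subset_sUnion_of_mem hA) hyA
  · -- monotone
    intro U V hU hV hUV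
    rintro s (⟨hs, hps⟩ | ⟨x, hx, rfl⟩)
    · obtain ⟨t, ht, hst⟩ := hUV s hs
      exact ⟨t, Or.inl ⟨ht, hst hps⟩, hst⟩
    · by_cases hxV : x ∈ ⋃₀ {t ∈ V | p ∈ t}
      · obtain ⟨t, ⟨ht, hpt⟩, hxt⟩ := hxV
        exact ⟨t, Or.inl ⟨ht, hpt⟩, Set.singleton_subset_iff.mpr hxt⟩
      · exact ⟨{x}, Or.inr ⟨x, hxV, rfl⟩, subset_rfl⟩
end

section
/- Every compact LOTS with a monotone closure-preserving operator is first countable. -/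
open Set Topology Filter

variable {X : Type*}

/-
In a compact LOTS, first countability at `y` can only fail through a one-sided approach to `y`
of uncountable cofinality; by symmetry it suffices to treat the left side. For `a < y`,
`rayCover y a` covers `X` by the rays `Iio b` (`b < y`) and `Ioi a`. Closure preservation of
`r (rayCover y a)` at `y` yields a threshold `c ∈ (a, y)`: every member of `r (rayCover y a)`
meeting `(c, y]` lies in `Ioi a`. Iterating thresholds gives `a₀ < a₁ < ⋯` below `y`. Were it
not cofinal, its supremum `z < y` would give a contradiction: by closure preservation of
`r (rayCover y z)` at `z`, some `aₘ` lies in a member `A` with `z ∈ closure A`, so `A` meets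
`(aₘ₊₁, y)`; by monotonicity `A` sits inside a member of `r (rayCover y aₘ)`, which therefore
lies in `Ioi aₘ` yet contains `aₘ`.
-/

theorem ClosurePreserving.eventually_notMem_sUnion [TopologicalSpace X]
    {F H : Set (Set X)} (hF : ClosurePreserving F) (hH : H ⊆ F) {x : X}
    (hx : ∀ A ∈ H, x ∉ closure A) :
    ∀ᶠ t in 𝓝 x, t ∉ ⋃₀ H := by
  have hxH : x ∉ closure (⋃₀ H) := by
    rw [hF H hH, mem_iUnion₂]
    rintro ⟨A, hA, hxA⟩
    exact hx A hA hxA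
  simpa [mem_closure_iff_frequently] using hxH

theorem CompactSpace.exists_isLUB [LinearOrder X] [TopologicalSpace X] [OrderTopology X]
    [CompactSpace X] {s : Set X} (hs : s.Nonempty) : ∃ z, IsLUB s z := by
  obtain ⟨z, -, hz⟩ := isClosed_closure.isCompact.exists_isLUB hs.closure
  exact ⟨z, (isLUB_congr (upperBounds_closure s)).1 hz⟩

theorem isCountablyGenerated_nhdsLE_of_seq [LinearOrder X] [TopologicalSpace X]
    [OrderTopology X] {y : X} {g : ℕ → X} (hg : ∀ n, g n < y)
    (hcof : ∀ u < y, ∃ n, u ≤ g n) :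
    (𝓝[≤] y).IsCountablyGenerated := by
  have hbasis : (𝓝[≤] y).HasBasis (fun _ : ℕ => True) (fun n => Ioc (g n) y) := by
    refine (nhdsLE_basis_of_exists_lt ⟨g 0, hg 0⟩).to_hasBasis (fun l hl => ?_)
      (fun n _ => ⟨g n, hg n, subset_rfl⟩)
    obtain ⟨n, hn⟩ := hcof l hl
    exact ⟨n, trivial, Ioc_subset_Ioc_left hn⟩
  exact hbasis.isCountablyGenerated

section RayCover

variable [LinearOrder X] [TopologicalSpace X] [OrderTopology X]

def rayCover (y a : X) : Set (Set X) := (Iio '' Iio y) ∪ {Ioi a}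

theorem isOpenCover_rayCover {y a : X} (hlim : ∀ w < y, ∃ v, w < v ∧ v < y) (ha : a < y) :
    IsOpenCover (rayCover y a) := by
  refine ⟨?_, eq_univ_of_forall fun t => ?_⟩
  · rintro s (⟨b, -, rfl⟩ | rfl)
    exacts [isOpen_Iio, isOpen_Ioi]
  · rcases lt_or_ge t y with hty | hyt
    · obtain ⟨v, htv, hvy⟩ := hlim t hty
      exact ⟨Iio v, Or.inl ⟨v, hvy, rfl⟩, htv⟩
    · exact ⟨Ioi a, Or.inr rfl, ha.trans_le hyt⟩

omit [TopologicalSpace X] [OrderTopology X] in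
theorem refines_rayCover_of_le {y a a' : X} (h : a ≤ a') :
    Refines (rayCover y a') (rayCover y a) := by
  rintro s (hs | rfl)
  · exact ⟨s, Or.inl hs, subset_rfl⟩
  · exact ⟨Ioi a, Or.inr rfl, Ioi_subset_Ioi h⟩

def IsThreshold (r : Set (Set X) → Set (Set X)) (y a c : X) : Prop :=
  ∀ A ∈ r (rayCover y a), (A ∩ Ioc c y).Nonempty → A ⊆ Ioi a

variable {r : Set (Set X) → Set (Set X)} {y : X}

theorem exists_isThreshold (hr : MonotoneCPOperator r) (hlim : ∀ w < y, ∃ v, w < v ∧ v < y)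
    {a : X} (ha : a < y) : ∃ c, a < c ∧ c < y ∧ IsThreshold r y a c := by
  obtain ⟨-, href, hcp⟩ := hr.1 _ (isOpenCover_rayCover hlim ha)
  set L := {A ∈ r (rayCover y a) | ∃ b < y, A ⊆ Iio b}
  have hL : ∀ᶠ t in 𝓝[≤] y, t ∉ ⋃₀ L := by
    refine nhdsWithin_le_nhds (hcp.eventually_notMem_sUnion (sep_subset _ _) ?_)
    rintro A ⟨-, b, hby, hAb⟩ hyA
    exact hby.not_ge (closure_minimal (hAb.trans Iio_subset_Iic_self) isClosed_Iic hyA)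
  obtain ⟨l, hly, hlL⟩ := (mem_nhdsLE_iff_exists_Ioc_subset' ha).1 hL
  obtain ⟨c, hc, hcy⟩ := hlim _ (max_lt ha hly)
  refine ⟨c, (le_max_left a l).trans_lt hc, hcy, ?_⟩
  rintro A hA ⟨t, htA, hct, hty⟩
  obtain ⟨s, (⟨b, hby, rfl⟩ | rfl), hAs⟩ := href A hA
  · exact absurd ⟨A, ⟨hA, b, hby, hAs⟩, htA⟩
      (hlL ⟨(le_max_right a l).trans_lt (hc.trans hct), hty⟩)
  · exact hAs

theorem eventually_not_isThreshold (hr : MonotoneCPOperator r)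
    (hlim : ∀ w < y, ∃ v, w < v ∧ v < y) {z : X} (hzy : z < y) :
    ∀ᶠ a in 𝓝[<] z, ∀ c < z, ¬ IsThreshold r y a c := by
  obtain ⟨hcov, -, hcp⟩ := hr.1 _ (isOpenCover_rayCover hlim hzy)
  set B := {A ∈ r (rayCover y z) | z ∉ closure A}
  have hB : ∀ᶠ t in 𝓝[<] z, t ∉ ⋃₀ B :=
    nhdsWithin_le_nhds (hcp.eventually_notMem_sUnion (sep_subset _ _) fun _ hA => hA.2)
  filter_upwards [hB, self_mem_nhdsWithin] with a haB (haz : a < z) c hcz hc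
  obtain ⟨A, hA, haA⟩ : a ∈ ⋃₀ r (rayCover y z) := hcov ▸ mem_univ a
  have hzA : z ∈ closure A := by_contra fun hzA => haB ⟨A, ⟨hA, hzA⟩, haA⟩
  obtain ⟨E, hE, hAE⟩ := hr.2 _ _ (isOpenCover_rayCover hlim hzy)
    (isOpenCover_rayCover hlim (haz.trans hzy)) (refines_rayCover_of_le haz.le) A hA
  obtain ⟨t, ⟨hct, hty⟩, htA⟩ :=
    mem_closure_iff.1 hzA _ (isOpen_Ioo (a := c) (b := y)) ⟨hcz, hzy⟩
  exact lt_irrefl a (hc E hE ⟨t, hAE htA, hct, hty.le⟩ (hAE haA))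

theorem exists_seq_cofinal_Iio [CompactSpace X] (hr : MonotoneCPOperator r) {l : X}
    (hl : l < y) : ∃ g : ℕ → X, (∀ n, g n < y) ∧ ∀ u < y, ∃ n, u ≤ g n := by
  by_cases hlim : ∀ w < y, ∃ v, w < v ∧ v < y
  swap
  · push Not at hlim
    obtain ⟨w, hwy, hw⟩ := hlim
    refine ⟨fun _ => w, fun _ => hwy, fun u huy => ⟨0, ?_⟩⟩
    exact not_lt.1 fun hwu => (hw u hwu).not_gt huy
  have hstep : ∀ a : Iio y, ∃ c : Iio y, a.1 < c.1 ∧ IsThreshold r y a c := fun a =>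
    let ⟨c, hac, hcy, hc⟩ := exists_isThreshold hr hlim a.2
    ⟨⟨c, hcy⟩, hac, hc⟩
  choose next hnext_gt hnext using hstep
  set g : ℕ → X := fun n => (next^[n] ⟨l, hl⟩).1
  have hg_succ : ∀ n, g (n + 1) = next (next^[n] ⟨l, hl⟩) := fun n =>
    congrArg Subtype.val (Function.iterate_succ_apply' next n _)
  have hg_mono : StrictMono g := strictMono_nat_of_lt_succ fun n => hg_succ n ▸ hnext_gt _
  refine ⟨g, fun n => (next^[n] ⟨l, hl⟩).2, fun u huy => ?_⟩
  by_contra! hgu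
  obtain ⟨z, hz⟩ := CompactSpace.exists_isLUB (range_nonempty g)
  have hg_lt : ∀ n, g n < z := fun n =>
    (hg_mono n.lt_succ_self).trans_le (hz.1 (mem_range_self _))
  have hzy : z < y := (hz.2 (forall_mem_range.2 fun n => (hgu n).le)).trans_lt huy
  have hg_tendsto : Tendsto g atTop (𝓝[<] z) :=
    tendsto_nhdsWithin_iff.2 ⟨tendsto_atTop_isLUB hg_mono.monotone hz, .of_forall hg_lt⟩
  obtain ⟨m, hm⟩ := (hg_tendsto.eventually (eventually_not_isThreshold hr hlim hzy)).exists
  exact hm _ (hg_lt (m + 1)) (hg_succ m ▸ hnext _)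

theorem isCountablyGenerated_nhdsLE [CompactSpace X] (hr : MonotoneCPOperator r) (y : X) :
    (𝓝[≤] y).IsCountablyGenerated := by
  by_cases hmin : ∃ l, l < y
  · obtain ⟨l, hl⟩ := hmin
    obtain ⟨g, hg, hcof⟩ := exists_seq_cofinal_Iio hr hl
    exact isCountablyGenerated_nhdsLE_of_seq hg hcof
  · push Not at hmin
    have hIic : Iic y = {y} :=
      eq_singleton_iff_unique_mem.2 ⟨le_rfl, fun t ht => ht.antisymm (hmin t)⟩
    rw [nhdsWithin, hIic, ← nhdsWithin, nhdsWithin_singleton]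
    infer_instance

end RayCover

/-- A compact LOTS with a monotone closure-preserving operator is first countable. -/
theorem stmt5 [LinearOrder X] [TopologicalSpace X] [OrderTopology X] [CompactSpace X]
    (r : Set (Set X) → Set (Set X)) (hr : MonotoneCPOperator r) :
    FirstCountableTopology X := by
  refine ⟨fun y => ?_⟩
  have := isCountablyGenerated_nhdsLE hr y
  have : CompactSpace Xᵒᵈ := ‹CompactSpace X›
  have : (𝓝[≥] y).IsCountablyGenerated :=
    isCountablyGenerated_nhdsLE (X := Xᵒᵈ) hr (OrderDual.toDual y)
  rw [← nhdsLE_sup_nhdsGE y]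
  infer_instance
end

section
/- Let X be a compact LOTS with a monotone closure-preserving operator r. Then X admits a monotone operator r₂ such that for every open cover U, r₂(U) is a finite cover of X by convex sets refining U which is closure-preserving, and if U refines V then r₂(U) refines r₂(V). Moreover, if r produces open covers, r₂ can be chosen to produce open covers. -/
/-!
Let `G U` be the family of order-convex hulls of the members of `r V`, where `V` is the cover by
the open order-convex sets that lie inside members of `U`, and let `r₂ U` consist of the maximal
members of `G U`. Hulls still refine `U`, and they stay closure-preserving: a point outside the
closures of the hulls that is a limit of their union is approached from one side only, and from
that side it is the supremum (or infimum) of the union, which a set and its hull share.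

In a compact LOTS a closure-preserving family has a member reaching furthest to the right (and one
reaching furthest to the left): the maximum of the closure of the union lies in the closure of a
member. Hence along a strictly increasing sequence, or (after Ramsey) along a sequence from an
antichain, the bounds eventually stabilise, respectively only shrink. Three convex sets within the
bounds of a convex `D`, each with a point outside `D`, have two such points on the same side of
`D`; these coincide and are extreme points of both sets. For an increasing sequence this
contradicts the choice of the points; for an antichain it makes two members comparable. So every
member of `G U` lies in a maximal one, and there are only finitely many maximal ones.
-/

open Set Topology Filter

variable {X : Type*}

section Order

variable [LinearOrder X] {s t D : Set X} {a x : X}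

def ordConnectedHull (s : Set X) : Set X := ↑(upperClosure s) ∩ ↑(lowerClosure s)

lemma subset_ordConnectedHull (s : Set X) : s ⊆ ordConnectedHull s :=
  subset_inter subset_upperClosure subset_lowerClosure

lemma ordConnected_ordConnectedHull (s : Set X) : (ordConnectedHull s).OrdConnected :=
  (upperClosure s).upper.ordConnected.inter (lowerClosure s).lower.ordConnected

lemma ordConnectedHull_subset (h : s ⊆ t) (ht : t.OrdConnected) : ordConnectedHull s ⊆ t :=
  ht.upperClosure_inter_lowerClosure ▸
    inter_subset_inter (upperClosure_anti h) (lowerClosure_mono h)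

lemma ordConnectedHull_mono (h : s ⊆ t) : ordConnectedHull s ⊆ ordConnectedHull t :=
  ordConnectedHull_subset (h.trans (subset_ordConnectedHull t)) (ordConnected_ordConnectedHull t)

lemma upperBounds_ordConnectedHull (s : Set X) : upperBounds (ordConnectedHull s) = upperBounds s :=
  (upperBounds_mono_set (subset_ordConnectedHull s)).antisymm <|
    upperBounds_lowerClosure (s := s) ▸ upperBounds_mono_set inter_subset_right

lemma lowerBounds_ordConnectedHull (s : Set X) : lowerBounds (ordConnectedHull s) = lowerBounds s :=
  (lowerBounds_mono_set (subset_ordConnectedHull s)).antisymm <|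
    lowerBounds_upperClosure (s := s) ▸ lowerBounds_mono_set inter_subset_left

lemma nonempty_sUnion_of_biUnion_ordConnectedHull {G : Set (Set X)}
    (h : (⋃ A ∈ G, ordConnectedHull A).Nonempty) : (⋃₀ G).Nonempty := by
  obtain ⟨y, hy⟩ := h
  obtain ⟨A, hA, hyA, -⟩ := mem_iUnion₂.1 hy
  obtain ⟨a, ha, -⟩ := mem_upperClosure.1 hyA
  exact ⟨a, A, hA, ha⟩

lemma Set.OrdConnected.mem_lowerBounds_or_mem_upperBounds (hs : s.OrdConnected) (hx : x ∉ s) :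
    x ∈ lowerBounds s ∨ x ∈ upperBounds s := by
  simp only [mem_lowerBounds, mem_upperBounds, or_iff_not_imp_left, not_forall, not_le]
  rintro ⟨a, ha, hax⟩ b hb
  by_contra! hxb
  exact hx (hs.out ha hb ⟨hax.le, hxb.le⟩)

lemma Set.OrdConnected.subset_or_subset_of_isLeast (hs : s.OrdConnected) (ht : t.OrdConnected)
    (has : IsLeast s a) (hat : IsLeast t a) : s ⊆ t ∨ t ⊆ s := by
  by_contra! h
  obtain ⟨⟨p, hps, hpt⟩, ⟨q, hqt, hqs⟩⟩ := And.intro (not_subset.1 h.1) (not_subset.1 h.2)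
  have hp : p ∈ upperBounds t := (ht.mem_lowerBounds_or_mem_upperBounds hpt).resolve_left
    fun hp => hpt (le_antisymm (hp hat.1) (has.2 hps) ▸ hat.1)
  have hq : q ∈ upperBounds s := (hs.mem_lowerBounds_or_mem_upperBounds hqs).resolve_left
    fun hq => hqs (le_antisymm (hq has.1) (hat.2 hqt) ▸ has.1)
  exact hpt (le_antisymm (hq hps) (hp hqt) ▸ hqt)

lemma Set.OrdConnected.subset_or_subset_of_isGreatest (hs : s.OrdConnected)
    (ht : t.OrdConnected) (has : IsGreatest s a) (hat : IsGreatest t a) : s ⊆ t ∨ t ⊆ s :=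
  Set.OrdConnected.subset_or_subset_of_isLeast (X := Xᵒᵈ) hs.dual ht.dual has hat

lemma Set.OrdConnected.exists_lt_eq_of_notMem (hD : D.OrdConnected) {B : Fin 3 → Set X}
    (hL : ∀ i, lowerBounds D ⊆ lowerBounds (B i)) (hU : ∀ i, upperBounds D ⊆ upperBounds (B i))
    {p : Fin 3 → X} (hp : ∀ i, p i ∈ B i) (hpD : ∀ i, p i ∉ D) :
    ∃ i j, i < j ∧ p i = p j ∧ ((IsLeast (B i) (p i) ∧ IsLeast (B j) (p i)) ∨
      (IsGreatest (B i) (p i) ∧ IsGreatest (B j) (p i))) := by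
  -- pigeonhole: two of the three points lie on the same side of `D`
  obtain ⟨i, j, hij, hside⟩ := Fintype.exists_ne_map_eq_of_card_lt
    (fun i => p i ∈ lowerBounds D) (by simp)
  wlog hlt : i < j generalizing i j
  · exact this j i hij.symm hside.symm (hij.lt_or_gt.resolve_left hlt)
  refine ⟨i, j, hlt, ?_⟩
  by_cases hi : p i ∈ lowerBounds D
  · have hj : p j ∈ lowerBounds D := hside ▸ hi
    have hij : p i = p j := le_antisymm (hL j hi (hp j)) (hL i hj (hp i))
    exact ⟨hij, .inl ⟨⟨hp i, hL i hi⟩, ⟨hij ▸ hp j, hL j hi⟩⟩⟩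
  · have hj : p j ∉ lowerBounds D := hside ▸ hi
    replace hi := (hD.mem_lowerBounds_or_mem_upperBounds (hpD i)).resolve_left hi
    replace hj := (hD.mem_lowerBounds_or_mem_upperBounds (hpD j)).resolve_left hj
    have hij : p i = p j := le_antisymm (hU i hj (hp i)) (hU j hi (hp j))
    exact ⟨hij, .inr ⟨⟨hp i, hU i hi⟩, ⟨hij ▸ hp j, hU j hi⟩⟩⟩

end Order

lemma ClosurePreserving.mono [TopologicalSpace X] {F G : Set (Set X)} (hF : ClosurePreserving F)
    (hGF : G ⊆ F) : ClosurePreserving G :=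
  fun H hH => hF H (hH.trans hGF)

section Topology

variable [LinearOrder X] [TopologicalSpace X] [OrderTopology X] {s : Set X}

lemma IsOpen.ordConnectedHull (hs : IsOpen s) : IsOpen (ordConnectedHull s) := by
  refine isOpen_iff_mem_nhds.2 fun x ⟨hxu, hxl⟩ => ?_
  obtain ⟨a, ha, hax⟩ := mem_upperClosure.1 hxu
  obtain ⟨b, hb, hxb⟩ := mem_lowerClosure.1 hxl
  rcases hax.eq_or_lt with rfl | hax
  · exact mem_of_superset (hs.mem_nhds ha) (subset_ordConnectedHull s)
  rcases hxb.eq_or_lt with rfl | hxb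
  · exact mem_of_superset (hs.mem_nhds hb) (subset_ordConnectedHull s)
  exact mem_of_superset (Ioo_mem_nhds hax hxb) fun y hy =>
    ⟨mem_upperClosure.2 ⟨a, ha, hy.1.le⟩, mem_lowerClosure.2 ⟨b, hb, hy.2.le⟩⟩

lemma IsOpen.ordConnectedComponent (hs : IsOpen s) (x : X) :
    IsOpen (ordConnectedComponent s x) :=
  isOpen_iff_mem_nhds.2 fun y hy => by
    rw [ordConnectedComponent_eq hy]
    exact ordConnectedComponent_mem_nhds.2 (hs.mem_nhds (ordConnectedComponent_subset hy))

lemma mem_closure_of_upperBounds_eq {s t : Set X} {x : X} (hst : upperBounds s = upperBounds t)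
    (hxs : x ∈ closure s) (hx : x ∈ upperBounds s) (ht : t.Nonempty) : x ∈ closure t := by
  have hlub := isLUB_of_mem_closure hx hxs
  rw [IsLUB, hst] at hlub
  exact IsLUB.mem_closure hlub ht

lemma mem_closure_of_lowerBounds_eq {s t : Set X} {x : X} (hst : lowerBounds s = lowerBounds t)
    (hxs : x ∈ closure s) (hx : x ∈ lowerBounds s) (ht : t.Nonempty) : x ∈ closure t :=
  mem_closure_of_upperBounds_eq (X := Xᵒᵈ) hst hxs hx ht

lemma mem_closure_sUnion_of_mem_upperBounds {G : Set (Set X)} {x : X}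
    (hx : x ∈ closure (⋃ A ∈ G, ordConnectedHull A)) (hxG : ∀ A ∈ G, x ∈ upperBounds A) :
    x ∈ closure (⋃₀ G) := by
  refine mem_closure_of_upperBounds_eq ?_ hx ?_ <|
    nonempty_sUnion_of_biUnion_ordConnectedHull (closure_nonempty_iff.1 ⟨x, hx⟩)
  · simp only [sUnion_eq_biUnion, upperBounds_iUnion, upperBounds_ordConnectedHull]
  · simpa only [upperBounds_iUnion, upperBounds_ordConnectedHull, mem_iInter] using hxG

lemma mem_closure_sUnion_of_mem_lowerBounds {G : Set (Set X)} {x : X}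
    (hx : x ∈ closure (⋃ A ∈ G, ordConnectedHull A)) (hxG : ∀ A ∈ G, x ∈ lowerBounds A) :
    x ∈ closure (⋃₀ G) := by
  refine mem_closure_of_lowerBounds_eq ?_ hx ?_ <|
    nonempty_sUnion_of_biUnion_ordConnectedHull (closure_nonempty_iff.1 ⟨x, hx⟩)
  · simp only [sUnion_eq_biUnion, lowerBounds_iUnion, lowerBounds_ordConnectedHull]
  · simpa only [lowerBounds_iUnion, lowerBounds_ordConnectedHull, mem_iInter] using hxG

lemma ClosurePreserving.image_ordConnectedHull {F : Set (Set X)} (hF : ClosurePreserving F) :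
    ClosurePreserving (ordConnectedHull '' F) := by
  intro H hH
  refine Subset.antisymm (fun x hx => ?_)
    (iUnion₂_subset fun B hB => closure_mono (subset_sUnion_of_mem hB))
  by_contra hxH
  simp only [mem_iUnion₂, not_exists] at hxH
  have hnot {G : Set (Set X)} (hG : G ⊆ {A ∈ F | ordConnectedHull A ∈ H}) :
      x ∉ closure (⋃₀ G) := by
    rw [hF G fun A hA => (hG hA).1, mem_iUnion₂]
    rintro ⟨A, hA, hxA⟩
    exact hxH _ (hG hA).2 (closure_mono (subset_ordConnectedHull A) hxA)
  let FL := {A ∈ F | ordConnectedHull A ∈ H ∧ x ∈ upperBounds A}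
  let FR := {A ∈ F | ordConnectedHull A ∈ H ∧ x ∈ lowerBounds A}
  have hsplit : ⋃₀ H ⊆ (⋃ A ∈ FL, ordConnectedHull A) ∪ ⋃ A ∈ FR, ordConnectedHull A := by
    rintro y ⟨_, hB, hyB⟩
    obtain ⟨A, hA, rfl⟩ := hH hB
    have hxA := fun h => hxH _ hB (subset_closure h)
    rcases (ordConnected_ordConnectedHull A).mem_lowerBounds_or_mem_upperBounds hxA with h | h
    · exact Or.inr (mem_biUnion ⟨hA, hB, lowerBounds_ordConnectedHull A ▸ h⟩ hyB)
    · exact Or.inl (mem_biUnion ⟨hA, hB, upperBounds_ordConnectedHull A ▸ h⟩ hyB)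
  rcases closure_union (s := ⋃ A ∈ FL, ordConnectedHull A) ▸ closure_mono hsplit hx with hL | hR
  · exact hnot (fun A hA => ⟨hA.1, hA.2.1⟩)
      (mem_closure_sUnion_of_mem_upperBounds hL fun A hA => hA.2.2)
  · exact hnot (fun A hA => ⟨hA.1, hA.2.1⟩)
      (mem_closure_sUnion_of_mem_lowerBounds hR fun A hA => hA.2.2)

end Topology

section Compact

variable [LinearOrder X] [TopologicalSpace X] [OrderTopology X] [CompactSpace X]
  {F : Set (Set X)}

lemma ClosurePreserving.exists_upperBounds_subset (hF : ClosurePreserving F)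
    (hne : (⋃₀ F).Nonempty) : ∃ B ∈ F, ∀ C ∈ F, upperBounds B ⊆ upperBounds C := by
  obtain ⟨s, hs⟩ := isClosed_closure.isCompact.exists_isGreatest hne.closure
  obtain ⟨B, hB, hsB⟩ := mem_iUnion₂.1 (hF F subset_rfl ▸ hs.1)
  exact ⟨B, hB, fun C hC u hu y hy =>
    (hs.2 (subset_closure (mem_sUnion_of_mem hy hC))).trans (closure_minimal hu isClosed_Iic hsB)⟩

lemma ClosurePreserving.exists_lowerBounds_subset (hF : ClosurePreserving F)
    (hne : (⋃₀ F).Nonempty) : ∃ B ∈ F, ∀ C ∈ F, lowerBounds B ⊆ lowerBounds C :=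
  haveI : CompactSpace Xᵒᵈ := ‹CompactSpace X›
  ClosurePreserving.exists_upperBounds_subset (X := Xᵒᵈ) hF hne

lemma ClosurePreserving.not_strictMono (hF : ClosurePreserving F)
    (hconv : ∀ B ∈ F, B.OrdConnected) {C : ℕ → Set X} (hCF : ∀ n, C n ∈ F) : ¬StrictMono C := by
  intro hC
  have hCP := hF.mono (range_subset_iff.2 hCF)
  obtain ⟨x, hx, -⟩ := exists_of_ssubset (hC zero_lt_one)
  have hne : (⋃₀ range C).Nonempty := ⟨x, mem_sUnion_of_mem hx (mem_range_self 1)⟩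
  obtain ⟨_, ⟨k, rfl⟩, hk⟩ := hCP.exists_upperBounds_subset hne
  obtain ⟨_, ⟨l, rfl⟩, hl⟩ := hCP.exists_lowerBounds_subset hne
  set N := max k l
  have hL n : lowerBounds (C N) ⊆ lowerBounds (C n) :=
    (lowerBounds_mono_set (hC.monotone (le_max_right k l))).trans (hl _ (mem_range_self n))
  have hU n : upperBounds (C N) ⊆ upperBounds (C n) :=
    (upperBounds_mono_set (hC.monotone (le_max_left k l))).trans (hk _ (mem_range_self n))
  choose p hp using fun i => exists_of_ssubset (hC (Nat.lt_succ_self (N + i)))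
  obtain ⟨i, j, hij, heq, -⟩ := (hconv _ (hCF N)).exists_lt_eq_of_notMem
    (B := fun i : Fin 3 => C (N + i + 1)) (p := fun i => p i) (fun _ => hL _) (fun _ => hU _)
    (fun i => (hp i).1) (fun i hi => (hp i).2 (hC.monotone (by omega) hi))
  exact (hp j).2 (heq ▸ hC.monotone (by omega : N + i + 1 ≤ N + j) (hp i).1)

lemma ClosurePreserving.exists_maximal_superset (hF : ClosurePreserving F)
    (hconv : ∀ B ∈ F, B.OrdConnected) {B : Set X} (hB : B ∈ F) :
    ∃ m, B ⊆ m ∧ Maximal (· ∈ F) m := by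
  by_contra! h
  have hnext (C : {C // C ∈ F ∧ B ⊆ C}) : ∃ C' : {C // C ∈ F ∧ B ⊆ C}, C.1 ⊂ C'.1 := by
    obtain ⟨C', hC'F, hCC', hC'C⟩ : ∃ C' ∈ F, C.1 ⊆ C' ∧ ¬C' ⊆ C.1 := by
      simpa [Maximal, C.2.1] using h C.1 C.2.2
    exact ⟨⟨C', hC'F, C.2.2.trans hCC'⟩, hCC', hC'C⟩
  choose next hnext using hnext
  exact hF.not_strictMono hconv (C := fun n => (next^[n] ⟨B, hB, subset_rfl⟩).1)
    (fun n => (next^[n] _).2.1) (strictMono_nat_of_lt_succ fun n => by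
      simpa only [Function.iterate_succ_apply'] using hnext _)

lemma ClosurePreserving.exists_subseq_upperBounds_mono (hF : ClosurePreserving F) {f : ℕ → Set X}
    (hfF : ∀ n, f n ∈ F) (hf : ∀ n, (f n).Nonempty) :
    ∃ g : ℕ ↪o ℕ, ∀ m n, m < n → upperBounds (f (g m)) ⊆ upperBounds (f (g n)) := by
  obtain ⟨g, hg | hg⟩ := exists_increasing_or_nonincreasing_subseq (· > ·) (upperBounds ∘ f)
  · have hCP := hF.mono (range_subset_iff.2 fun n => hfF (g n))
    obtain ⟨_, ⟨k, rfl⟩, hk⟩ := hCP.exists_upperBounds_subset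
      ⟨_, mem_sUnion_of_mem (hf (g 0)).some_mem (mem_range_self 0)⟩
    exact ((hg k (k + 1) k.lt_succ_self).not_ge (hk _ (mem_range_self _))).elim
  · refine ⟨g, fun m n hmn => ?_⟩
    have hup (s : Set X) : IsUpperSet (upperBounds s) := fun _ _ hab ha _ hx => (ha hx).trans hab
    exact ((hup _).total (hup _)).elim id fun h => (eq_of_le_of_not_lt h (hg m n hmn)).ge

lemma ClosurePreserving.exists_subseq_lowerBounds_mono (hF : ClosurePreserving F) {f : ℕ → Set X}
    (hfF : ∀ n, f n ∈ F) (hf : ∀ n, (f n).Nonempty) :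
    ∃ g : ℕ ↪o ℕ, ∀ m n, m < n → lowerBounds (f (g m)) ⊆ lowerBounds (f (g n)) :=
  haveI : CompactSpace Xᵒᵈ := ‹CompactSpace X›
  ClosurePreserving.exists_subseq_upperBounds_mono (X := Xᵒᵈ) hF hfF hf

lemma IsAntichain.finite_of_closurePreserving {M : Set (Set X)} (hM : IsAntichain (· ⊆ ·) M)
    (hMcp : ClosurePreserving M) (hconv : ∀ B ∈ M, B.OrdConnected) : M.Finite := by
  refine Set.not_infinite.1 fun hinf => ?_
  have hinf' : (M \ {∅}).Infinite := hinf.sdiff (finite_singleton ∅)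
  set f : ℕ → Set X := fun n => hinf'.natEmbedding _ n
  have hfM n : f n ∈ M := (hinf'.natEmbedding _ n).2.1
  have hf n : (f n).Nonempty := nonempty_iff_ne_empty.2 (hinf'.natEmbedding _ n).2.2
  have hf_inj : f.Injective := Subtype.val_injective.comp (hinf'.natEmbedding _).injective
  obtain ⟨g, hg⟩ := hMcp.exists_subseq_upperBounds_mono hfM hf
  obtain ⟨h, hh⟩ := hMcp.exists_subseq_lowerBounds_mono (fun n => hfM (g n)) (fun n => hf (g n))
  set φ := h.trans g
  have hB (i : ℕ) : f (φ (i + 1)) ≠ f (φ 0) := hf_inj.ne (φ.injective.ne i.succ_ne_zero)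
  choose p hp using fun i => not_subset.1 (hM (hfM _) (hfM _) (hB i))
  obtain ⟨i, j, hij, -, hext⟩ := (hconv _ (hfM _)).exists_lt_eq_of_notMem
    (B := fun i : Fin 3 => f (φ (i + 1))) (p := fun i => p i)
    (fun i => hh 0 (i + 1) i.val.succ_pos) (fun i => hg _ _ (h.strictMono i.val.succ_pos))
    (fun i => (hp i).1) (fun i => (hp i).2)
  have hne : f (φ (i + 1)) ≠ f (φ (j + 1)) :=
    hf_inj.ne (φ.injective.ne (by simp [Fin.val_eq_val, hij.ne]))
  have hi := hconv _ (hfM (φ (i + 1)))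
  have hj := hconv _ (hfM (φ (j + 1)))
  have hcomp := hext.elim (fun h => hi.subset_or_subset_of_isLeast hj h.1 h.2)
    fun h => hi.subset_or_subset_of_isGreatest hj h.1 h.2
  exact hcomp.elim (hM (hfM _) (hfM _) hne) (hM (hfM _) (hfM _) hne.symm)

lemma ClosurePreserving.finite_setOf_maximal (hF : ClosurePreserving F)
    (hconv : ∀ B ∈ F, B.OrdConnected) : {B | Maximal (· ∈ F) B}.Finite :=
  (setOfPred_maximal_antichain _).finite_of_closurePreserving (hF.mono fun _ hB => hB.prop)
    fun B hB => hconv B hB.prop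

end Compact

section Refinement

variable [LinearOrder X] [TopologicalSpace X] {U V : Set (Set X)}

def ordConnectedRefinement (U : Set (Set X)) : Set (Set X) :=
  {c | IsOpen c ∧ c.OrdConnected ∧ ∃ t ∈ U, c ⊆ t}

lemma IsOpenCover.ordConnectedRefinement [OrderTopology X] (hU : IsOpenCover U) :
    IsOpenCover (ordConnectedRefinement U) := by
  refine ⟨fun c hc => hc.1, eq_univ_of_forall fun x => ?_⟩
  obtain ⟨t, htU, hxt⟩ := hU.2 ▸ mem_univ x
  exact ⟨ordConnectedComponent t x, ⟨(hU.1 t htU).ordConnectedComponent x, inferInstance, t, htU,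
    ordConnectedComponent_subset⟩, self_mem_ordConnectedComponent.2 hxt⟩

lemma refines_ordConnectedRefinement (h : Refines U V) :
    Refines (ordConnectedRefinement U) (ordConnectedRefinement V) := by
  rintro c ⟨hco, hcc, t, htU, hct⟩
  obtain ⟨t', ht'V, htt'⟩ := h t htU
  exact ⟨c, ⟨hco, hcc, t', ht'V, hct.trans htt'⟩, subset_rfl⟩

lemma refines_image_ordConnectedHull {A : Set (Set X)} (h : Refines A (ordConnectedRefinement U)) :
    Refines (ordConnectedHull '' A) U := by
  rintro _ ⟨s, hs, rfl⟩
  obtain ⟨c, ⟨-, hcc, t, htU, hct⟩, hsc⟩ := h s hs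
  exact ⟨t, htU, (ordConnectedHull_subset hsc hcc).trans hct⟩

end Refinement

/-- A compact LOTS with a monotone closure-preserving operator has a monotone
closure-preserving operator producing finite covers by convex sets; moreover if the
original operator is open then so is the new one. -/
theorem stmt7 [LinearOrder X] [TopologicalSpace X] [OrderTopology X] [CompactSpace X]
    (r : Set (Set X) → Set (Set X)) (hr : MonotoneCPOperator r) :
    ∃ r₂ : Set (Set X) → Set (Set X),
      (∀ U, IsOpenCover U →
        (r₂ U).Finite ∧ ⋃₀ r₂ U = Set.univ ∧ (∀ A ∈ r₂ U, A.OrdConnected) ∧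
          Refines (r₂ U) U ∧ ClosurePreserving (r₂ U)) ∧
      (∀ U V, IsOpenCover U → IsOpenCover V → Refines U V → Refines (r₂ U) (r₂ V)) ∧
      ((∀ U, IsOpenCover U → ∀ A ∈ r U, IsOpen A) →
        ∀ U, IsOpenCover U → ∀ A ∈ r₂ U, IsOpen A) := by
  obtain ⟨hr, hr_mono⟩ := hr
  set G := fun U => ordConnectedHull '' r (ordConnectedRefinement U)
  have hG_cp U (hU : IsOpenCover U) : ClosurePreserving (G U) :=
    (hr _ hU.ordConnectedRefinement).2.2.image_ordConnectedHull
  have hG_conv U : ∀ B ∈ G U, B.OrdConnected := by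
    rintro _ ⟨A, -, rfl⟩
    exact ordConnected_ordConnectedHull A
  refine ⟨fun U => {B | Maximal (· ∈ G U) B}, fun U hU => ⟨?_, ?_, ?_, ?_, ?_⟩,
    fun U V hU hV hUV => ?_, fun hopen U hU => ?_⟩
  · exact (hG_cp U hU).finite_setOf_maximal (hG_conv U)
  · refine eq_univ_of_forall fun x => ?_
    obtain ⟨A, hA, hxA⟩ := (hr _ hU.ordConnectedRefinement).1 ▸ mem_univ x
    obtain ⟨m, hAm, hm⟩ := (hG_cp U hU).exists_maximal_superset (hG_conv U) (mem_image_of_mem _ hA)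
    exact ⟨m, hm, hAm (subset_ordConnectedHull A hxA)⟩
  · exact fun B hB => hG_conv U B hB.prop
  · exact fun B hB => refines_image_ordConnectedHull (hr _ hU.ordConnectedRefinement).2.1 B hB.prop
  · exact (hG_cp U hU).mono fun B hB => hB.prop
  · rintro _ ⟨⟨A, hA, rfl⟩, -⟩
    obtain ⟨A', hA', hAA'⟩ := hr_mono _ _ hU.ordConnectedRefinement hV.ordConnectedRefinement
      (refines_ordConnectedRefinement hUV) A hA
    obtain ⟨m, hA'm, hm⟩ :=
      (hG_cp V hV).exists_maximal_superset (hG_conv V) (mem_image_of_mem _ hA')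
    exact ⟨m, hm, (ordConnectedHull_mono hAA').trans hA'm⟩
  · rintro _ ⟨⟨A, hA, rfl⟩, -⟩
    exact (hopen _ hU.ordConnectedRefinement A hA).ordConnectedHull
end

section
/- Suppose (X, τ, <) is a GO-space with a monotone closure-preserving operator r. Then X has a convex monotone closure-preserving operator r₁ (i.e., all members of r₁(U) are order-convex); moreover, if r(U) always consists of open sets, then r₁(U) can be chosen to consist of open sets. -/
open Set Topology Filter

variable {X : Type*}

set_option linter.unusedSectionVars false
section Aux

variable [LinearOrder X] [TopologicalSpace X]

/-- Order-convex hull of a set. -/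
def ordHull (A : Set X) : Set X := {x | ∃ a ∈ A, ∃ b ∈ A, a ≤ x ∧ x ≤ b}

lemma subset_ordHull (A : Set X) : A ⊆ ordHull A :=
  fun x hx => ⟨x, hx, x, hx, le_rfl, le_rfl⟩

lemma ordHull_mono {A B : Set X} (h : A ⊆ B) : ordHull A ⊆ ordHull B :=
  by rintro x ⟨a, ha, b, hb, h1, h2⟩; exact ⟨a, h ha, b, h hb, h1, h2⟩

lemma ordHull_subset {A T : Set X} (hT : T.OrdConnected) (h : A ⊆ T) : ordHull A ⊆ T :=
  fun _ ⟨a, ha, b, hb, h1, h2⟩ => hT.out (h ha) (h hb) ⟨h1, h2⟩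

lemma ordHull_ordConnected (A : Set X) : (ordHull A).OrdConnected := by
  constructor
  rintro x ⟨a, ha, b, hb, hax, -⟩ y ⟨a', ha', b', hb', -, hyb'⟩ z ⟨hxz, hzy⟩
  exact ⟨a, ha, b', hb', hax.trans hxz, hzy.trans hyb'⟩

/-- the convex open refinement of a cover -/
def starCover (U : Set (Set X)) : Set (Set X) :=
  {T | IsOpen T ∧ T.OrdConnected ∧ ∃ s ∈ U, T ⊆ s}

lemma starCover_isOpenCover (hGO : IsGOSpace X) {U : Set (Set X)} (hU : IsOpenCover U) :
    IsOpenCover (starCover U) := by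
  refine ⟨fun s hs => hs.1, ?_⟩
  apply Set.eq_univ_of_forall
  intro x
  have hx : x ∈ ⋃₀ U := hU.2 ▸ Set.mem_univ x
  obtain ⟨s, hs, hxs⟩ := hx
  obtain ⟨t, ht, hxt, hts, htc⟩ := hGO.2.2 s (hU.1 s hs) x hxs
  exact ⟨t, ⟨ht, htc, s, hs, hts⟩, hxt⟩

lemma starCover_mono {U V : Set (Set X)} (h : Refines U V) : starCover U ⊆ starCover V := by
  rintro T ⟨h1, h2, s, hs, hTs⟩
  obtain ⟨t, ht, hst⟩ := h s hs
  exact ⟨h1, h2, t, ht, hTs.trans hst⟩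

lemma mem_closure_of_convex (hGO : IsGOSpace X) {x : X} {S : Set X}
    (h : ∀ W : Set X, IsOpen W → W.OrdConnected → x ∈ W → (W ∩ S).Nonempty) :
    x ∈ closure S := by
  rw [mem_closure_iff]
  intro O hO hxO
  obtain ⟨t, ht, hxt, hts, htc⟩ := hGO.2.2 O hO x hxO
  obtain ⟨y, hyW, hyS⟩ := h t ht htc hxt
  exact ⟨y, hts hyW, hyS⟩

lemma ordHull_isOpen (hGO : IsGOSpace X) {A : Set X} (hA : IsOpen A) :
    IsOpen (ordHull A) := by
  rw [isOpen_iff_forall_mem_open]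
  rintro x ⟨a, ha, b, hb, hax, hxb⟩
  by_cases hxA : x ∈ A
  · exact ⟨A, subset_ordHull A, hA, hxA⟩
  · have hax' : a < x := lt_of_le_of_ne hax (fun h => hxA (h ▸ ha))
    have hxb' : x < b := lt_of_le_of_ne hxb (fun h => hxA (h ▸ hb))
    refine ⟨Set.Ioi a ∩ Set.Iio b, ?_, (hGO.2.1 a).inter (hGO.1 b), hax', hxb'⟩
    rintro z ⟨hz1, hz2⟩
    exact ⟨a, ha, b, hb, le_of_lt hz1, le_of_lt hz2⟩

end Aux
/-- A GO-space with a monotone closure-preserving operator has a convex one;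
if the original operator is open then so is the convex one. -/
theorem stmt10 [LinearOrder X] [TopologicalSpace X] (hGO : IsGOSpace X)
    (r : Set (Set X) → Set (Set X)) (hr : MonotoneCPOperator r) :
    ∃ r₁ : Set (Set X) → Set (Set X),
      MonotoneCPOperator r₁ ∧
      (∀ U, IsOpenCover U → ∀ A ∈ r₁ U, A.OrdConnected) ∧
      ((∀ U, IsOpenCover U → ∀ A ∈ r U, IsOpen A) →
        ∀ U, IsOpenCover U → ∀ A ∈ r₁ U, IsOpen A) := by
  classical
  obtain ⟨hr1, hr2⟩ := hr
  refine ⟨fun U => ordHull '' r (starCover U), ⟨fun U hU => ?_, ?_⟩, ?_, ?_⟩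
  · have hUs := starCover_isOpenCover hGO hU
    obtain ⟨hcov, href, hcp⟩ := hr1 (starCover U) hUs
    refine ⟨?_, ?_, ?_⟩
    · -- cover
      apply Set.eq_univ_of_univ_subset
      rw [← hcov]
      rintro x ⟨A, hA, hxA⟩
      exact ⟨ordHull A, ⟨A, hA, rfl⟩, subset_ordHull A hxA⟩
    · -- refines
      rintro s ⟨A, hA, rfl⟩
      obtain ⟨T, ⟨-, hTc, t, ht, hTt⟩, hAT⟩ := href A hA
      exact ⟨t, ht, (ordHull_subset hTc hAT).trans hTt⟩
    · -- closure preserving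
      intro H hH
      set G : Set (Set X) := {A ∈ r (starCover U) | ordHull A ∈ H} with hGdef
      have hHG : ⋃₀ H = ⋃ A ∈ G, ordHull A := by
        apply Set.Subset.antisymm
        · rintro x ⟨C, hC, hxC⟩
          obtain ⟨A, hA, rfl⟩ := hH hC
          exact Set.mem_biUnion ⟨hA, hC⟩ hxC
        · rintro x hx
          simp only [Set.mem_iUnion] at hx
          obtain ⟨A, ⟨-, hAH⟩, hxA⟩ := hx
          exact ⟨ordHull A, hAH, hxA⟩
      apply Set.Subset.antisymm
      · intro x hx
        by_cases hmem : ∃ A ∈ G, x ∈ ordHull A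
        · obtain ⟨A, hA, hxA⟩ := hmem
          exact Set.mem_biUnion hA.2 (subset_closure hxA)
        · push_neg at hmem
          have hxG : x ∈ closure (⋃₀ G) := by
            apply mem_closure_of_convex hGO
            intro W hWo hWc hxW
            have : (W ∩ ⋃₀ H).Nonempty := by
              rw [mem_closure_iff] at hx
              obtain ⟨y, hy1, hy2⟩ := hx W hWo hxW
              exact ⟨y, hy1, hy2⟩
            obtain ⟨y, hyW, hyH⟩ := this
            rw [hHG] at hyH
            simp only [Set.mem_iUnion] at hyH
            obtain ⟨A, hAG, a, ha, b, hb, hay, hyb⟩ := hyH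
            by_cases haW : a ∈ W
            · exact ⟨a, haW, A, hAG, ha⟩
            by_cases hbW : b ∈ W
            · exact ⟨b, hbW, A, hAG, hb⟩
            -- otherwise x ∈ ordHull A, contradiction
            exfalso
            apply hmem A hAG
            have hax : a ≤ x := by
              by_contra hcon
              push_neg at hcon
              exact haW (hWc.out hxW hyW ⟨le_of_lt hcon, hay⟩)
            have hxb : x ≤ b := by
              by_contra hcon
              push_neg at hcon
              exact hbW (hWc.out hyW hxW ⟨hyb, le_of_lt hcon⟩)
            exact ⟨a, ha, b, hb, hax, hxb⟩
          have hGsub : G ⊆ r (starCover U) := fun A hA => hA.1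
          rw [hcp G hGsub] at hxG
          simp only [Set.mem_iUnion] at hxG
          obtain ⟨A, hAG, hxA⟩ := hxG
          exact Set.mem_biUnion hAG.2
            (closure_mono (subset_ordHull A) hxA)
      · refine Set.iUnion₂_subset fun C hC => closure_mono fun x hx => ⟨C, hC, hx⟩
  · -- monotone
    intro U V hU hV hUV
    rintro s ⟨A, hA, rfl⟩
    have := hr2 (starCover U) (starCover V) (starCover_isOpenCover hGO hU)
      (starCover_isOpenCover hGO hV)
      (fun T hT => ⟨T, starCover_mono hUV hT, Set.Subset.rfl⟩)
    obtain ⟨B, hB, hAB⟩ := this A hA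
    exact ⟨ordHull B, ⟨B, hB, rfl⟩, ordHull_mono hAB⟩
  · -- convex
    rintro U hU A ⟨B, hB, rfl⟩
    exact ordHull_ordConnected B
  · -- open
    rintro hopen U hU A ⟨B, hB, rfl⟩
    exact ordHull_isOpen hGO (hopen (starCover U) (starCover_isOpenCover hGO hU) B hB)
end

section
/- Let X be a compact LOTS with a monotone closure-preserving operator, and let z ∈ X be a point in the closure of (←, z). Then z is not an ω₁-limit from the left; that is, it is not the case that sup of every countable subset of (←, z) is strictly below z. Equivalently, there is an increasing sequence (x_n) in (←, z) with sup_n x_n = z. -/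
open Set Topology Filter

variable {X : Type*}

/-- In a compact LOTS with a monotone closure-preserving operator, every point in the
closure of `(←, z)` is the supremum of a strictly increasing sequence below it. -/
theorem stmt11 [LinearOrder X] [TopologicalSpace X] [OrderTopology X] [CompactSpace X]
    (r : Set (Set X) → Set (Set X)) (hr : MonotoneCPOperator r)
    (z : X) (hz : z ∈ closure (Set.Iio z)) :
    ∃ x : ℕ → X, StrictMono x ∧ (∀ n, x n < z) ∧ IsLUB (Set.range x) z := by
  classical
  obtain ⟨hr1, hr2⟩ := hr
  -- `Iio z` is nonempty
  have hIio : (Iio z).Nonempty := by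
    rcases (Iio z).eq_empty_or_nonempty with h | h
    · rw [h] at hz; simp at hz
    · exact h
  -- density below z
  have hdense : ∀ a, a < z → ∃ u, a < u ∧ u < z := by
    intro a ha
    have h1 : Ioi a ∈ 𝓝 z := isOpen_Ioi.mem_nhds ha
    obtain ⟨u, hu⟩ := (mem_closure_iff_nhds.mp hz (Ioi a) h1)
    exact ⟨u, hu.1, hu.2⟩
  -- the covers
  set U : X → Set (Set X) := fun c => insert (Ioi c) {S | ∃ b, b < z ∧ S = Iio b} with hU
  have hUcover : ∀ c, c < z → IsOpenCover (U c) := by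
    intro c hc
    constructor
    · rintro S (rfl | ⟨b, hb, rfl⟩)
      · exact isOpen_Ioi
      · exact isOpen_Iio
    · ext t
      simp only [mem_sUnion, mem_univ, iff_true]
      rcases le_or_gt t c with ht | ht
      · obtain ⟨u, hcu, huz⟩ := hdense c hc
        exact ⟨Iio u, Or.inr ⟨u, huz, rfl⟩, lt_of_le_of_lt ht hcu⟩
      · exact ⟨Ioi c, Or.inl rfl, ht⟩
  have hUref : ∀ c c', c ≤ c' → Refines (U c') (U c) := by
    intro c c' hcc
    rintro S (rfl | ⟨b, hb, rfl⟩)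
    · exact ⟨Ioi c, Or.inl rfl, fun t ht => lt_of_le_of_lt hcc ht⟩
    · exact ⟨Iio b, Or.inr ⟨b, hb, rfl⟩, subset_rfl⟩
  -- key fact: for each c < z there is y < z such that any member of r (U c)
  -- containing a point above y is contained in Ioi c
  have key : ∀ c, c < z → ∃ y, y < z ∧
      ∀ A ∈ r (U c), ∀ t ∈ A, y < t → A ⊆ Ioi c := by
    intro c hc
    obtain ⟨hcov, href, hcp⟩ := hr1 (U c) (hUcover c hc)
    set Hc : Set (Set X) := {A | A ∈ r (U c) ∧ ∃ b, b < z ∧ A ⊆ Iio b} with hHc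
    have hsub : Hc ⊆ r (U c) := fun A hA => hA.1
    have hzcl : z ∉ closure (⋃₀ Hc) := by
      rw [hcp Hc hsub]
      simp only [mem_iUnion, not_exists]
      rintro A ⟨hA, b, hb, hAb⟩ hmem
      have : closure A ⊆ Iic b :=
        closure_minimal (fun t ht => le_of_lt (hAb ht)) isClosed_Iic
      exact absurd (this hmem) (not_le.mpr hb)
    have hO : (closure (⋃₀ Hc))ᶜ ∈ 𝓝 z :=
      (isClosed_closure.isOpen_compl).mem_nhds hzcl
    obtain ⟨y, hyz, hIoc⟩ := exists_Ioc_subset_of_mem_nhds hO hIio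
    refine ⟨y, hyz, ?_⟩
    intro A hA t htA hyt
    obtain ⟨T, hT, hAT⟩ := href A hA
    rcases hT with rfl | ⟨b, hb, rfl⟩
    · exact hAT
    · -- A ⊆ Iio b with b < z : impossible since t ∈ A, t > y
      exfalso
      rcases le_or_gt t z with htz | htz
      · have h1 : t ∈ (closure (⋃₀ Hc))ᶜ := hIoc ⟨hyt, htz⟩
        have h2 : t ∈ ⋃₀ Hc := ⟨A, ⟨hA, b, hb, hAT⟩, htA⟩
        exact h1 (subset_closure h2)
      · exact absurd (hAT htA) (not_lt.mpr (le_of_lt (lt_trans hb htz)))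
  choose y hy1 hy2 using key
  -- the step function
  have step : ∀ c (hc : c < z), ∃ c', c < c' ∧ y c hc < c' ∧ c' < z := by
    intro c hc
    obtain ⟨u, hu1, hu2⟩ := hdense (max c (y c hc)) (max_lt hc (hy1 c hc))
    exact ⟨u, lt_of_le_of_lt (le_max_left _ _) hu1,
      lt_of_le_of_lt (le_max_right _ _) hu1, hu2⟩
  choose g hg1 hg2 hg3 using step
  obtain ⟨c0, hc0⟩ := hIio
  -- the sequence
  let f : {a : X // a < z} → {a : X // a < z} := fun s => ⟨g s.1 s.2, hg3 s.1 s.2⟩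
  let cs : ℕ → {a : X // a < z} := fun n => f^[n] ⟨c0, hc0⟩
  let c : ℕ → X := fun n => (cs n).1
  have hlt : ∀ n, c n < z := fun n => (cs n).2
  have hcs_succ : ∀ n, cs (n + 1) = f (cs n) := by
    intro n
    simp only [cs, Function.iterate_succ_apply']
  have hsucc1 : ∀ n, c n < c (n + 1) := by
    intro n
    have := hcs_succ n
    simp only [c, this, f]
    exact hg1 _ _
  have hsucc2 : ∀ n, y (c n) (hlt n) < c (n + 1) := by
    intro n
    have := hcs_succ n
    simp only [c, this, f]
    exact hg2 _ _
  have smono : StrictMono c := strictMono_nat_of_lt_succ hsucc1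
  -- the LUB
  have hKcpt : IsCompact (closure (range c)) := isClosed_closure.isCompact
  obtain ⟨s, -, hsK⟩ := hKcpt.exists_isLUB ⟨c 0, subset_closure (mem_range_self 0)⟩
  have hs : IsLUB (range c) s := by
    constructor
    · exact fun x hx => hsK.1 (subset_closure hx)
    · intro u hu
      refine hsK.2 ?_
      intro x hx
      have : closure (range c) ⊆ Iic u := closure_minimal hu isClosed_Iic
      exact this hx
  have hsz : s ≤ z := hs.2 (by rintro x ⟨n, rfl⟩; exact le_of_lt (hlt n))
  rcases eq_or_lt_of_le hsz with hEq | hslt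
  · exact ⟨c, smono, hlt, hEq ▸ hs⟩
  -- contradiction case : s < z
  exfalso
  have hcns : ∀ n, c n < s :=
    fun n => lt_of_lt_of_le (hsucc1 n) (hs.1 (mem_range_self (n + 1)))
  have hscl : s ∈ closure (range c) := by
    rw [mem_closure_iff_nhds]
    intro N hN
    obtain ⟨l, hls, hIoc⟩ := exists_Ioc_subset_of_mem_nhds hN ⟨c 0, hcns 0⟩
    have : ∃ n, l < c n := by
      by_contra h
      push_neg at h
      exact absurd (hs.2 (by rintro x ⟨n, rfl⟩; exact h n)) (not_le.mpr hls)
    obtain ⟨n, hn⟩ := this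
    exact ⟨c n, hIoc ⟨hn, le_of_lt (hcns n)⟩, mem_range_self n⟩
  obtain ⟨hcov_s, href_s, hcp_s⟩ := hr1 (U s) (hUcover s hslt)
  -- the subfamily of members of r (U s) meeting the sequence
  set Hs : Set (Set X) := {A | A ∈ r (U s) ∧ ∃ n, c n ∈ A} with hHs
  have hrange : range c ⊆ ⋃₀ Hs := by
    rintro x ⟨n, rfl⟩
    have : c n ∈ ⋃₀ r (U s) := hcov_s ▸ mem_univ _
    obtain ⟨A, hA, hcA⟩ := this
    exact ⟨A, ⟨hA, n, hcA⟩, hcA⟩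
  have hsHs : s ∈ closure (⋃₀ Hs) := closure_mono hrange hscl
  rw [hcp_s Hs (fun A hA => hA.1)] at hsHs
  simp only [mem_iUnion] at hsHs
  obtain ⟨A, ⟨hAr, n, hcnA⟩, hsA⟩ := hsHs
  -- every such A is contained in Ioi (c m) for every m, contradiction with c n ∈ A
  have hAsub : ∀ m, A ⊆ Ioi (c m) := by
    intro m
    have hym : y (c m) (hlt m) < s := lt_trans (hsucc2 m) (hcns (m + 1))
    have hnb : Ioi (y (c m) (hlt m)) ∈ 𝓝 s := isOpen_Ioi.mem_nhds hym
    obtain ⟨t, ht⟩ := mem_closure_iff_nhds.mp hsA _ hnb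
    -- refine r (U s) into r (U (c m))
    have hrefm : Refines (r (U s)) (r (U (c m))) :=
      hr2 (U s) (U (c m)) (hUcover s hslt) (hUcover (c m) (hlt m))
        (hUref (c m) s (le_of_lt (hcns m)))
    obtain ⟨B, hBr, hAB⟩ := hrefm A hAr
    have hB : B ⊆ Ioi (c m) := hy2 (c m) (hlt m) B hBr t (hAB ht.2) ht.1
    exact hAB.trans hB
  exact lt_irrefl (c n) (hAsub n hcnA)
end

section
/- If a GO-space (X, τ, <) is monotonically metacompact, then X has a monotone open locally-finite operator. -/
/-!
Refine an open cover `U`, monotonically in `U`, by its open order-convex subsets, apply the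
given operator, and split each member of the result into its order-convex components. These
components form a point-finite open cover, so each of them lies in a maximal one; the maximal
components still cover and depend monotonically on `U`, and, being an antichain of open convex
sets, they are locally finite.
-/

open Set Topology Filter

variable {X : Type*}

def PointFinite (D : Set (Set X)) : Prop :=
  ∀ x, {A ∈ D | x ∈ A}.Finite

theorem PointFinite.subset {D D' : Set (Set X)} (h : PointFinite D') (hDD' : D ⊆ D') :
    PointFinite D :=
  fun x => (h x).subset fun _ hA => ⟨hDD' hA.1, hA.2⟩

theorem PointFinite.exists_subset_maximal {D : Set (Set X)} (h : PointFinite D) {C : Set X}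
    (hC : C ∈ D) {x : X} (hx : x ∈ C) : ∃ M, C ⊆ M ∧ Maximal (· ∈ D) M := by
  obtain ⟨M, hCM, hM, hMmax⟩ := (h x).exists_le_maximal ⟨hC, hx⟩
  exact ⟨M, hCM, hM.1, fun E hE hME => hMmax ⟨hE, hME hM.2⟩ hME⟩

theorem PointFinite.refines_setOf_maximal {D : Set (Set X)} (h : PointFinite D)
    (hne : ∀ C ∈ D, C.Nonempty) : Refines D {M | Maximal (· ∈ D) M} := by
  intro C hC
  obtain ⟨x, hx⟩ := hne C hC
  obtain ⟨M, hCM, hM⟩ := h.exists_subset_maximal hC hx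
  exact ⟨M, hM, hCM⟩

theorem Refines.of_subset {A B : Set (Set X)} (h : A ⊆ B) : Refines A B :=
  fun s hs => ⟨s, h hs, subset_rfl⟩

theorem Refines.trans {A B C : Set (Set X)} (hAB : Refines A B) (hBC : Refines B C) :
    Refines A C := by
  intro s hs
  obtain ⟨t, ht, hst⟩ := hAB s hs
  obtain ⟨u, hu, htu⟩ := hBC t ht
  exact ⟨u, hu, hst.trans htu⟩

theorem Refines.sUnion_subset_sUnion {A B : Set (Set X)} (h : Refines A B) : ⋃₀ A ⊆ ⋃₀ B := by
  rintro x ⟨s, hs, hx⟩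
  obtain ⟨t, ht, hst⟩ := h s hs
  exact ⟨t, ht, hst hx⟩

section LinearOrder

variable [LinearOrder X]

theorem Set.OrdConnected.subset_Iio_or_subset_Ioi {A : Set X} (hA : A.OrdConnected) {x : X}
    (hx : x ∉ A) : A ⊆ Iio x ∨ A ⊆ Ioi x := by
  by_contra! h
  obtain ⟨⟨a, haA, hax⟩, ⟨b, hbA, hxb⟩⟩ := And.intro (not_subset.1 h.1) (not_subset.1 h.2)
  exact hx (hA.out hbA haA ⟨not_lt.1 hxb, not_lt.1 hax⟩)

def convexComponents (D : Set (Set X)) : Set (Set X) :=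
  {C | ∃ A ∈ D, ∃ x ∈ A, ordConnectedComponent A x = C}

theorem ordConnected_of_mem_convexComponents {D : Set (Set X)} {C : Set X}
    (hC : C ∈ convexComponents D) : C.OrdConnected := by
  obtain ⟨A, -, x, -, rfl⟩ := hC
  infer_instance

theorem nonempty_of_mem_convexComponents {D : Set (Set X)} {C : Set X}
    (hC : C ∈ convexComponents D) : C.Nonempty := by
  obtain ⟨A, -, x, hx, rfl⟩ := hC
  exact nonempty_ordConnectedComponent.2 hx

theorem sUnion_convexComponents (D : Set (Set X)) : ⋃₀ convexComponents D = ⋃₀ D := by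
  refine subset_antisymm ?_ ?_
  · rintro y ⟨_, ⟨A, hA, x, -, rfl⟩, hy⟩
    exact ⟨A, hA, ordConnectedComponent_subset hy⟩
  · rintro x ⟨A, hA, hx⟩
    exact ⟨_, ⟨A, hA, x, hx, rfl⟩, self_mem_ordConnectedComponent.2 hx⟩

theorem refines_convexComponents (D : Set (Set X)) : Refines (convexComponents D) D := by
  rintro _ ⟨A, hA, x, -, rfl⟩
  exact ⟨A, hA, ordConnectedComponent_subset⟩

theorem Refines.convexComponents {D D' : Set (Set X)} (h : Refines D D') :
    Refines (convexComponents D) (convexComponents D') := by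
  rintro _ ⟨A, hA, x, hx, rfl⟩
  obtain ⟨A', hA', hAA'⟩ := h A hA
  exact ⟨_, ⟨A', hA', x, hAA' hx, rfl⟩,
    subset_ordConnectedComponent (self_mem_ordConnectedComponent.2 hx)
      (ordConnectedComponent_subset.trans hAA')⟩

theorem pointFinite_convexComponents {D : Set (Set X)} (h : PointFinite D) :
    PointFinite (convexComponents D) := by
  intro y
  refine ((h y).image fun A => ordConnectedComponent A y).subset ?_
  rintro _ ⟨⟨A, hA, x, -, rfl⟩, hy⟩
  exact ⟨A, ⟨hA, ordConnectedComponent_subset hy⟩, (ordConnectedComponent_eq hy).symm⟩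

def maximalConvexComponents (D : Set (Set X)) : Set (Set X) :=
  {M | Maximal (· ∈ convexComponents D) M}

theorem refines_maximalConvexComponents (D : Set (Set X)) :
    Refines (maximalConvexComponents D) D :=
  fun M hM => (refines_convexComponents D) M hM.prop

theorem refines_maximalConvexComponents_of_pointFinite {D D' : Set (Set X)}
    (h : PointFinite D') (hDD' : Refines D D') :
    Refines (convexComponents D) (maximalConvexComponents D') :=
  hDD'.convexComponents.trans <|
    (pointFinite_convexComponents h).refines_setOf_maximal fun _ => nonempty_of_mem_convexComponents

theorem sUnion_maximalConvexComponents {D : Set (Set X)} (h : PointFinite D) :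
    ⋃₀ maximalConvexComponents D = ⋃₀ D := by
  refine subset_antisymm (refines_maximalConvexComponents D).sUnion_subset_sUnion ?_
  rw [← sUnion_convexComponents]
  exact (refines_maximalConvexComponents_of_pointFinite h
    (Refines.of_subset subset_rfl)).sUnion_subset_sUnion

end LinearOrder

section GOSpace

variable [LinearOrder X] [TopologicalSpace X]

def convexRefinement (U : Set (Set X)) : Set (Set X) :=
  {s | IsOpen s ∧ s.OrdConnected ∧ ∃ t ∈ U, s ⊆ t}

theorem refines_convexRefinement (U : Set (Set X)) :
    Refines (convexRefinement U) U :=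
  fun _ hs => hs.2.2

theorem Refines.convexRefinement {U V : Set (Set X)} (h : Refines U V) :
    Refines (convexRefinement U) (convexRefinement V) := by
  rintro s ⟨hs, hsc, t, ht, hst⟩
  obtain ⟨t', ht', htt'⟩ := h t ht
  exact ⟨s, ⟨hs, hsc, t', ht', hst.trans htt'⟩, subset_rfl⟩

theorem isOpenCover_convexRefinement
    (hbase : ∀ s : Set X, IsOpen s → ∀ x ∈ s, ∃ t, IsOpen t ∧ x ∈ t ∧ t ⊆ s ∧ t.OrdConnected)
    {U : Set (Set X)} (hU : IsOpenCover U) : IsOpenCover (convexRefinement U) := by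
  refine ⟨fun s hs => hs.1, eq_univ_of_forall fun x => ?_⟩
  obtain ⟨t, htU, hxt⟩ := hU.2 ▸ mem_univ x
  obtain ⟨s, hs, hxs, hst, hsc⟩ := hbase t (hU.1 t htU) x hxt
  exact ⟨s, ⟨hs, hsc, t, htU, hst⟩, hxs⟩

theorem isOpen_ordConnectedComponent
    (hbase : ∀ s : Set X, IsOpen s → ∀ x ∈ s, ∃ t, IsOpen t ∧ x ∈ t ∧ t ⊆ s ∧ t.OrdConnected)
    {A : Set X} (hA : IsOpen A) (x : X) : IsOpen (ordConnectedComponent A x) := by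
  refine isOpen_iff_forall_mem_open.2 fun y hy => ?_
  obtain ⟨t, ht, hyt, htA, htc⟩ := hbase A hA y (ordConnectedComponent_subset hy)
  refine ⟨t, ?_, ht, hyt⟩
  rw [ordConnectedComponent_eq hy]
  exact subset_ordConnectedComponent hyt htA

/- If some `A₀ ⊆ Ioi x` meets `E` at `q₀`, then every `A ⊆ Ioi x` meeting `E ∩ Iio q₀` sticks out
of `E` (as `D` is an antichain), necessarily beyond `q₀` by convexity of `E`, so `q₀ ∈ A`. -/
theorem exists_mem_nhds_finite_subset_Ioi (hIio : ∀ a : X, IsOpen (Iio a))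
    {D : Set (Set X)} (hpf : PointFinite D) (hconv : ∀ A ∈ D, A.OrdConnected)
    (hanti : IsAntichain (· ⊆ ·) D) {E : Set X} (hED : E ∈ D) (hE : IsOpen E) {x : X}
    (hxE : x ∈ E) : ∃ t ∈ 𝓝 x, {A ∈ D | A ⊆ Ioi x ∧ (A ∩ t).Nonempty}.Finite := by
  by_cases h : ∃ A₀ ∈ D, A₀ ⊆ Ioi x ∧ (A₀ ∩ E).Nonempty
  · obtain ⟨A₀, -, hA₀x, q₀, hq₀A₀, hq₀E⟩ := h
    refine ⟨E ∩ Iio q₀, (hE.inter (hIio q₀)).mem_nhds ⟨hxE, hA₀x hq₀A₀⟩, (hpf q₀).subset ?_⟩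
    rintro A ⟨hAD, hAx, q, hqA, hqE, hqq₀⟩
    obtain ⟨p, hpA, hpE⟩ : ∃ p ∈ A, p ∉ E :=
      not_subset.1 fun hAE => lt_irrefl x (hAx (hanti.eq hAD hED hAE ▸ hxE))
    have hq₀p : q₀ < p :=
      not_le.1 fun hpq₀ => hpE ((hconv E hED).out hxE hq₀E ⟨(hAx hpA).le, hpq₀⟩)
    exact ⟨hAD, (hconv A hAD).out hqA hpA ⟨hqq₀.le, hq₀p.le⟩⟩
  · refine ⟨E, hE.mem_nhds hxE, finite_empty.subset ?_⟩
    rintro A ⟨hAD, hAx, hAE⟩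
    exact h ⟨A, hAD, hAx, hAE⟩

theorem exists_mem_nhds_finite_subset_Iio (hIoi : ∀ a : X, IsOpen (Ioi a))
    {D : Set (Set X)} (hpf : PointFinite D) (hconv : ∀ A ∈ D, A.OrdConnected)
    (hanti : IsAntichain (· ⊆ ·) D) {E : Set X} (hED : E ∈ D) (hE : IsOpen E) {x : X}
    (hxE : x ∈ E) : ∃ t ∈ 𝓝 x, {A ∈ D | A ⊆ Iio x ∧ (A ∩ t).Nonempty}.Finite :=
  exists_mem_nhds_finite_subset_Ioi (X := Xᵒᵈ) (fun a => hIoi (OrderDual.ofDual a)) hpf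
    (fun A hA => (hconv A hA).dual) hanti hED hE (x := OrderDual.toDual x) hxE

theorem IsAntichain.locallyFinite_of_pointFinite (hIio : ∀ a : X, IsOpen (Iio a))
    (hIoi : ∀ a : X, IsOpen (Ioi a)) {D : Set (Set X)} (hanti : IsAntichain (· ⊆ ·) D)
    (hpf : PointFinite D) (hconv : ∀ A ∈ D, A.OrdConnected) (hopen : ∀ A ∈ D, IsOpen A)
    (hcov : ⋃₀ D = univ) (x : X) : ∃ t ∈ 𝓝 x, {A ∈ D | (A ∩ t).Nonempty}.Finite := by
  obtain ⟨E, hED, hxE⟩ := hcov ▸ mem_univ x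
  obtain ⟨tR, htR, hR⟩ :=
    exists_mem_nhds_finite_subset_Ioi hIio hpf hconv hanti hED (hopen E hED) hxE
  obtain ⟨tL, htL, hL⟩ :=
    exists_mem_nhds_finite_subset_Iio hIoi hpf hconv hanti hED (hopen E hED) hxE
  refine ⟨tR ∩ tL, inter_mem htR htL, (((hpf x).union hR).union hL).subset ?_⟩
  rintro A ⟨hAD, hAt⟩
  by_cases hxA : x ∈ A
  · exact Or.inl (Or.inl ⟨hAD, hxA⟩)
  rcases (hconv A hAD).subset_Iio_or_subset_Ioi hxA with hAx | hAx
  · exact Or.inr ⟨hAD, hAx, hAt.mono (inter_subset_inter_right A inter_subset_right)⟩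
  · exact Or.inl (Or.inr ⟨hAD, hAx, hAt.mono (inter_subset_inter_right A inter_subset_left)⟩)

theorem isOpen_of_mem_maximalConvexComponents
    (hbase : ∀ s : Set X, IsOpen s → ∀ x ∈ s, ∃ t, IsOpen t ∧ x ∈ t ∧ t ⊆ s ∧ t.OrdConnected)
    {D : Set (Set X)} (hopen : ∀ A ∈ D, IsOpen A) {M : Set X}
    (hM : M ∈ maximalConvexComponents D) : IsOpen M := by
  obtain ⟨A, hA, x, -, rfl⟩ := hM.prop
  exact isOpen_ordConnectedComponent hbase (hopen A hA) x

end GOSpace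

/-- A monotonically metacompact GO-space has a monotone open locally-finite operator. -/
theorem stmt14 [LinearOrder X] [TopologicalSpace X] (hGO : IsGOSpace X)
    (r : Set (Set X) → Set (Set X))
    (h1 : ∀ U, IsOpenCover U →
      (∀ A ∈ r U, IsOpen A) ∧ ⋃₀ r U = Set.univ ∧ Refines (r U) U ∧
        ∀ x : X, {A ∈ r U | x ∈ A}.Finite)
    (h2 : ∀ U V, IsOpenCover U → IsOpenCover V → Refines U V → Refines (r U) (r V)) :
    ∃ r' : Set (Set X) → Set (Set X),
      (∀ U, IsOpenCover U →
        (∀ A ∈ r' U, IsOpen A) ∧ ⋃₀ r' U = Set.univ ∧ Refines (r' U) U ∧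
          ∀ x : X, ∃ t ∈ 𝓝 x, {A ∈ r' U | (A ∩ t).Nonempty}.Finite) ∧
      ∀ U V, IsOpenCover U → IsOpenCover V → Refines U V → Refines (r' U) (r' V) := by
  obtain ⟨hIio, hIoi, hbase⟩ := hGO
  have hcover {U : Set (Set X)} (hU : IsOpenCover U) :=
    h1 _ (isOpenCover_convexRefinement hbase hU)
  refine ⟨fun U => maximalConvexComponents (r (convexRefinement U)), fun U hU => ?_,
    fun U V hU hV hUV => ?_⟩
  · obtain ⟨hopen, hcov, href, hpf⟩ := hcover hU
    have hMopen : ∀ M ∈ maximalConvexComponents (r (convexRefinement U)), IsOpen M :=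
      fun M hM => isOpen_of_mem_maximalConvexComponents hbase hopen hM
    have hMcov := (sUnion_maximalConvexComponents hpf).trans hcov
    refine ⟨hMopen, hMcov, ?_, ?_⟩
    · exact (refines_maximalConvexComponents _).trans (href.trans (refines_convexRefinement U))
    · exact (setOfPred_maximal_antichain _).locallyFinite_of_pointFinite hIio hIoi
        ((pointFinite_convexComponents hpf).subset fun M hM => hM.prop)
        (fun M hM => ordConnected_of_mem_convexComponents hM.prop) hMopen hMcov
  · exact (Refines.of_subset fun M hM => hM.prop).trans <|
      refines_maximalConvexComponents_of_pointFinite (hcover hV).2.2.2 <|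
        h2 _ _ (isOpenCover_convexRefinement hbase hU) (isOpenCover_convexRefinement hbase hV)
          hUV.convexRefinement
end

section
/- Suppose (X, τ, <) is a GO-space with a monotone closure-preserving operator r, and suppose (y_n) is a strictly decreasing sequence of points of X converging to a point y, where each [y_n, →) is open and y_n is not isolated. Let U_n = {(←, y_n), [y_n, →)} and let r̄ be a monotone closure-preserving operator producing closed convex sets with the interval-capturing property of Lemma 2.5. If G_n ∈ r̄(U_n) with y_n ∈ G_n, then the family {G_n : n ∈ ω} is point-finite. -/
open Set Topology Filter

variable {X : Type*}

/-- Lemma 2.6: for a strictly decreasing convergent sequence of points of `R_τ`, the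
chosen members `G n ∈ r̄(U_n)` containing `y n` form a point-finite family. -/
theorem stmt16 [LinearOrder X] [TopologicalSpace X] (hGO : IsGOSpace X)
    (rb : Set (Set X) → Set (Set X)) (hrb : MonotoneCPOperator rb)
    (hclosed : ∀ U, IsOpenCover U → ∀ A ∈ rb U, IsClosed A ∧ A.OrdConnected)
    (hcapR : ∀ U, IsOpenCover U → ∀ x : X, IsOpen (Set.Ici x) →
      ¬ IsOpen ({x} : Set X) → ∃ g, x < g ∧ ∃ G ∈ rb U, Set.Ico x g ⊆ G)
    (hcapL : ∀ U, IsOpenCover U → ∀ x : X, IsOpen (Set.Iic x) →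
      ¬ IsOpen ({x} : Set X) → ∃ h, h < x ∧ ∃ H ∈ rb U, Set.Ioc h x ⊆ H)
    (y : ℕ → X) (hdec : StrictAnti y) (y₀ : X)
    (hconv : Filter.Tendsto y Filter.atTop (𝓝 y₀))
    (hR : ∀ n, IsOpen (Set.Ici (y n)) ∧ ¬ IsOpen ({y n} : Set X))
    (G : ℕ → Set X)
    (hG : ∀ n, G n ∈ rb {Set.Iio (y n), Set.Ici (y n)} ∧ y n ∈ G n) :
    ∀ x : X, {n : ℕ | x ∈ G n}.Finite := by
  intro x
  by_contra hfin
  have hS : {n : ℕ | x ∈ G n}.Infinite := hfin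
  -- y₀ is strictly below every y n
  have hy0 : ∀ n, y₀ < y n := by
    intro n
    by_contra hle
    push_neg at hle
    have hopen : IsOpen (Set.Ici (y (n+1))) := (hR (n+1)).1
    have hmem : y₀ ∈ Set.Ici (y (n+1)) :=
      le_of_lt (lt_of_lt_of_le (hdec (Nat.lt_succ_self n)) hle)
    have h2 := hconv (hopen.mem_nhds hmem)
    rw [Filter.mem_map, Filter.mem_atTop_sets] at h2
    obtain ⟨M, hM⟩ := h2
    have h3 : y (max M (n+2)) < y (n+1) := hdec (by omega)
    exact absurd (hM _ (le_max_left _ _)) (not_le.mpr h3)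
  -- each U n is an open cover
  have hUcover : ∀ n, IsOpenCover ({Set.Iio (y n), Set.Ici (y n)} : Set (Set X)) := by
    intro n
    constructor
    · intro s hs
      simp only [Set.mem_insert_iff, Set.mem_singleton_iff] at hs
      rcases hs with rfl | rfl
      · exact hGO.1 _
      · exact (hR n).1
    · ext z
      simp only [Set.mem_sUnion, Set.mem_univ, iff_true]
      rcases lt_or_ge z (y n) with h | h
      · exact ⟨_, Set.mem_insert _ _, h⟩
      · exact ⟨_, Set.mem_insert_of_mem _ rfl, h⟩
  -- each G n lies in Ici (y n)
  have hGsub : ∀ n, G n ⊆ Set.Ici (y n) := by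
    intro n
    obtain ⟨t, ht, hsub⟩ := (hrb.1 _ (hUcover n)).2.1 (G n) (hG n).1
    simp only [Set.mem_insert_iff, Set.mem_singleton_iff] at ht
    rcases ht with rfl | rfl
    · exact absurd (hsub (hG n).2) (lt_irrefl _)
    · exact hsub
  -- pick N with x ∈ G N
  obtain ⟨N, hN⟩ := hS.nonempty
  have hNx : y N ≤ x := hGsub N hN
  -- the coarser cover V
  set V : Set (Set X) :=
    insert (Set.Iio (y N)) {A | ∃ k, N ≤ k ∧ A = Set.Ici (y k)} with hVdef
  have hVcover : IsOpenCover V := by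
    constructor
    · intro s hs
      rw [hVdef, Set.mem_insert_iff] at hs
      rcases hs with rfl | ⟨k, _, rfl⟩
      · exact hGO.1 _
      · exact (hR k).1
    · ext z
      simp only [Set.mem_sUnion, Set.mem_univ, iff_true]
      rcases lt_or_ge z (y N) with h | h
      · exact ⟨_, Set.mem_insert _ _, h⟩
      · exact ⟨Set.Ici (y N), Set.mem_insert_of_mem _ ⟨N, le_refl N, rfl⟩, h⟩
  -- for n ≥ N, U n refines V
  have hUV : ∀ n, N ≤ n →
      Refines ({Set.Iio (y n), Set.Ici (y n)} : Set (Set X)) V := by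
    intro n hn s hs
    simp only [Set.mem_insert_iff, Set.mem_singleton_iff] at hs
    rcases hs with rfl | rfl
    · exact ⟨Set.Iio (y N), Set.mem_insert _ _,
        Set.Iio_subset_Iio (hdec.antitone hn)⟩
    · exact ⟨Set.Ici (y n), Set.mem_insert_of_mem _ ⟨n, hn, rfl⟩, subset_rfl⟩
  -- choose members of rb V containing G n for n ≥ N
  have hex : ∀ n : ℕ, ∃ A, N ≤ n → A ∈ rb V ∧ G n ⊆ A := by
    intro n
    by_cases hn : N ≤ n
    · obtain ⟨A, h1, h2⟩ :=
        hrb.2 _ V (hUcover n) hVcover (hUV n hn) (G n) (hG n).1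
      exact ⟨A, fun _ => ⟨h1, h2⟩⟩
    · exact ⟨∅, fun h => absurd h hn⟩
  choose f hf using hex
  -- the subfamily H
  set H : Set (Set X) := {A | ∃ n, (x ∈ G n ∧ N ≤ n) ∧ A = f n} with hHdef
  have hHsub : H ⊆ rb V := by
    rintro A ⟨n, ⟨_, hn⟩, rfl⟩
    exact (hf n hn).1
  -- y₀ is in the closure of the union
  have hclos : y₀ ∈ closure (⋃₀ H) := by
    rw [mem_closure_iff]
    intro O hO hyO
    have h2 := hconv (hO.mem_nhds hyO)
    rw [Filter.mem_map, Filter.mem_atTop_sets] at h2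
    obtain ⟨M, hM⟩ := h2
    obtain ⟨n, hnS, hn⟩ := hS.exists_gt (max M N)
    have hnM : M ≤ n := le_of_lt (lt_of_le_of_lt (le_max_left _ _) hn)
    have hnN : N ≤ n := le_of_lt (lt_of_le_of_lt (le_max_right _ _) hn)
    exact ⟨y n, hM n hnM, f n, ⟨n, ⟨hnS, hnN⟩, rfl⟩, (hf n hnN).2 (hG n).2⟩
  rw [(hrb.1 V hVcover).2.2 H hHsub] at hclos
  simp only [Set.mem_iUnion] at hclos
  obtain ⟨A, ⟨n, ⟨hnS, hnN⟩, rfl⟩, hyA⟩ := hclos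
  have hfn : f n ∈ rb V := (hf n hnN).1
  have hyfn : y₀ ∈ f n :=
    (hclosed V hVcover (f n) hfn).1.closure_eq ▸ hyA
  obtain ⟨t, ht, hsub⟩ := (hrb.1 V hVcover).2.1 (f n) hfn
  rw [hVdef, Set.mem_insert_iff] at ht
  rcases ht with rfl | ⟨k, hk, rfl⟩
  · exact absurd (hsub ((hf n hnN).2 hnS)) (not_lt.mpr hNx)
  · exact absurd (hsub hyfn) (not_le.mpr (hy0 k))
end
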